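/- arXiv:2511.04515 — 2 statements merged into one kernel-verified Lean document; each statement's English description precedes it below -/
import Mathlib

section
/- Let S, A be compact Polish spaces, E, E⁰ Polish spaces, λ_ε ∈ P(E), and F : S × A × P(S×A) × E × E⁰ → S Borel measurable. Suppose there is C̄_F > 0 such that for all (s,a,Λ,e⁰), (s̃,ã,Λ̃,ẽ⁰), the integral ∫_E d_S(F(s,a,Λ,e,e⁰), F(s̃,ã,Λ̃,e,ẽ⁰)) λ_ε(de) ≤ C̄_F·(d_S(s,s̃) + d_A(a,ã) + W(Λ,Λ̃) + d_{E⁰}(e⁰,ẽ⁰)). Define the lifted transition F̄(μ,Λ,e⁰) ∈ P(S) as the pushforward of Λ ⊗ λ_ε by (s,a,e) ↦ F(s,a,Λ,e,e⁰), for Λ with first marginal μ. Then for all (μ,Λ,e⁰) and (μ̃,Λ̃,ẽ⁰) with pj_S(Λ) = μ, pj_S(Λ̃) = μ̃: W_{P(S)}(F̄(μ,Λ,e⁰), F̄(μ̃,Λ̃,ẽ⁰)) ≤ C̄_F·(2·W_{P(S×A)}(Λ,Λ̃) + d_{E⁰}(e⁰,ẽ⁰)). -/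
/-!
Fix any coupling `γ` of `Λ` and `Λ̃` and run both transitions on a `γ`-distributed pair of
state-actions with one common noise sample `e ∼ λ_ε`. This couples `F̄(μ,Λ,e⁰)` with
`F̄(μ̃,Λ̃,ẽ⁰)`, and integrating the averaged Lipschitz bound on `F` shows its cost is at most
`C̄_F (∫ d dγ + W(Λ,Λ̃) + d(e⁰,ẽ⁰))`. Taking the infimum over `γ` turns `∫ d dγ` into a second
copy of `W(Λ,Λ̃)`.
-/

open MeasureTheory

/-- 1-Wasserstein distance between two (probability) measures on a metric measurable
space, defined as the infimum over all couplings of the mean distance. -/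
noncomputable def W1 {X : Type*} [MeasurableSpace X] [PseudoMetricSpace X]
    (μ ν : Measure X) : ℝ :=
  sInf {r : ℝ | ∃ γ : Measure (X × X), IsProbabilityMeasure γ ∧
    γ.map Prod.fst = μ ∧ γ.map Prod.snd = ν ∧ r = ∫ p, dist p.1 p.2 ∂γ}

/-- 1-Wasserstein distance on `P(S × A)` where `S × A` carries the sum metric
`d_{S×A}((s,a),(s',a')) = d_S(s,s') + d_A(a,a')`. -/
noncomputable def W1sum {S A : Type*} [MeasurableSpace S] [PseudoMetricSpace S]
    [MeasurableSpace A] [PseudoMetricSpace A] (Λ Λ' : Measure (S × A)) : ℝ :=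
  sInf {r : ℝ | ∃ γ : Measure ((S × A) × (S × A)), IsProbabilityMeasure γ ∧
    γ.map Prod.fst = Λ ∧ γ.map Prod.snd = Λ' ∧
    r = ∫ q, (dist q.1.1 q.2.1 + dist q.1.2 q.2.2) ∂γ}

section CommonNoise

variable {X X' E Y Y' : Type*} [MeasurableSpace X] [MeasurableSpace X'] [MeasurableSpace E]
  [MeasurableSpace Y] [MeasurableSpace Y']

noncomputable def commonNoiseCoupling (γ : Measure (X × X')) (ν : Measure E) (G : X × E → Y)
    (G' : X' × E → Y') : Measure (Y × Y') :=
  (γ.prod ν).map fun p => (G (p.1.1, p.2), G' (p.1.2, p.2))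

variable {γ : Measure (X × X')} {ν : Measure E} {G : X × E → Y} {G' : X' × E → Y'}

theorem measurable_commonNoise (hG : Measurable G) (hG' : Measurable G') :
    Measurable fun p : (X × X') × E => (G (p.1.1, p.2), G' (p.1.2, p.2)) :=
  (hG.comp (measurable_fst.fst.prodMk measurable_snd)).prodMk
    (hG'.comp (measurable_fst.snd.prodMk measurable_snd))

theorem isProbabilityMeasure_commonNoiseCoupling [IsProbabilityMeasure γ]
    [IsProbabilityMeasure ν] (hG : Measurable G) (hG' : Measurable G') :
    IsProbabilityMeasure (commonNoiseCoupling γ ν G G') :=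
  Measure.isProbabilityMeasure_map (measurable_commonNoise hG hG').aemeasurable

variable [SFinite γ] [SFinite ν]

theorem map_fst_commonNoiseCoupling (hG : Measurable G) (hG' : Measurable G') :
    (commonNoiseCoupling γ ν G G').map Prod.fst = ((γ.map Prod.fst).prod ν).map G := by
  rw [commonNoiseCoupling, Measure.map_map measurable_fst (measurable_commonNoise hG hG')]
  conv_rhs => rw [← Measure.map_id (μ := ν), Measure.map_prod_map _ _ measurable_fst measurable_id,
    Measure.map_map hG (measurable_fst.prodMap measurable_id)]
  rfl

theorem map_snd_commonNoiseCoupling (hG : Measurable G) (hG' : Measurable G') :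
    (commonNoiseCoupling γ ν G G').map Prod.snd = ((γ.map Prod.snd).prod ν).map G' := by
  rw [commonNoiseCoupling, Measure.map_map measurable_snd (measurable_commonNoise hG hG')]
  conv_rhs => rw [← Measure.map_id (μ := ν), Measure.map_prod_map _ _ measurable_snd measurable_id,
    Measure.map_map hG' (measurable_snd.prodMap measurable_id)]
  rfl

theorem integral_dist_commonNoiseCoupling [PseudoMetricSpace Y] [BorelSpace Y]
    [SecondCountableTopology Y] [BoundedSpace Y] [IsFiniteMeasure γ] [IsFiniteMeasure ν]
    {G : X × E → Y} {G' : X' × E → Y} (hG : Measurable G) (hG' : Measurable G') :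
    ∫ p, dist p.1 p.2 ∂(commonNoiseCoupling γ ν G G') =
      ∫ q, ∫ e, dist (G (q.1, e)) (G' (q.2, e)) ∂ν ∂γ := by
  have hmeas := measurable_commonNoise hG hG'
  rw [commonNoiseCoupling, integral_map hmeas.aemeasurable measurable_dist.aestronglyMeasurable]
  refine integral_prod _ (Integrable.of_bound (measurable_dist.comp hmeas).aestronglyMeasurable
    (Metric.diam (Set.univ : Set Y)) (ae_of_all _ fun p => ?_))
  rw [Real.norm_of_nonneg dist_nonneg]
  exact Metric.dist_le_diam_of_mem (Bornology.isBounded_univ.mpr ‹_›) trivial trivial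

end CommonNoise

theorem W1_le_integral_dist {X : Type*} [MeasurableSpace X] [PseudoMetricSpace X]
    {μ ν : Measure X} (γ : Measure (X × X)) [IsProbabilityMeasure γ]
    (hγ₁ : γ.map Prod.fst = μ) (hγ₂ : γ.map Prod.snd = ν) :
    W1 μ ν ≤ ∫ p, dist p.1 p.2 ∂γ := by
  refine csInf_le ⟨0, ?_⟩ ⟨γ, inferInstance, hγ₁, hγ₂, rfl⟩
  rintro _ ⟨δ, -, -, -, rfl⟩
  exact integral_nonneg fun _ => dist_nonneg

theorem le_W1sum {S A : Type*} [MeasurableSpace S] [PseudoMetricSpace S]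
    [MeasurableSpace A] [PseudoMetricSpace A] {Λ Λ' : Measure (S × A)}
    [IsProbabilityMeasure Λ] [IsProbabilityMeasure Λ'] {c : ℝ}
    (h : ∀ γ : Measure ((S × A) × (S × A)), IsProbabilityMeasure γ →
      γ.map Prod.fst = Λ → γ.map Prod.snd = Λ' →
      c ≤ ∫ q, (dist q.1.1 q.2.1 + dist q.1.2 q.2.2) ∂γ) :
    c ≤ W1sum Λ Λ' := by
  refine le_csInf ⟨_, Λ.prod Λ', inferInstance, by simp, by simp, rfl⟩ ?_
  rintro _ ⟨γ, hγ, hγ₁, hγ₂, rfl⟩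
  exact h γ hγ hγ₁ hγ₂

theorem le_mul_W1sum_add {S A : Type*} [MeasurableSpace S] [PseudoMetricSpace S]
    [MeasurableSpace A] [PseudoMetricSpace A] {Λ Λ' : Measure (S × A)}
    [IsProbabilityMeasure Λ] [IsProbabilityMeasure Λ'] {w K c : ℝ} (hK : 0 < K)
    (h : ∀ γ : Measure ((S × A) × (S × A)), IsProbabilityMeasure γ →
      γ.map Prod.fst = Λ → γ.map Prod.snd = Λ' →
      w ≤ K * (∫ q, (dist q.1.1 q.2.1 + dist q.1.2 q.2.2) ∂γ + c)) :
    w ≤ K * (W1sum Λ Λ' + c) := by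
  have key := le_W1sum (c := w / K - c) fun γ hγ hγ₁ hγ₂ => by
    rw [sub_le_iff_le_add, div_le_iff₀ hK, mul_comm]
    exact h γ hγ hγ₁ hγ₂
  rw [sub_le_iff_le_add, div_le_iff₀ hK, mul_comm] at key
  exact key

theorem integrable_dist_add_dist {S A : Type*} [PseudoMetricSpace S] [CompactSpace S]
    [MeasurableSpace S] [BorelSpace S] [PseudoMetricSpace A] [CompactSpace A] [MeasurableSpace A]
    [BorelSpace A] (γ : Measure ((S × A) × (S × A))) [IsFiniteMeasure γ] :
    Integrable (fun q : (S × A) × (S × A) => dist q.1.1 q.2.1 + dist q.1.2 q.2.2) γ :=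
  Continuous.integrable_of_hasCompactSupport (by fun_prop) (.of_compactSpace _)

theorem stmt_6_general {S A E E0 : Type*}
    [MetricSpace S] [CompactSpace S] [MeasurableSpace S] [BorelSpace S]
    [MetricSpace A] [CompactSpace A] [MeasurableSpace A] [BorelSpace A]
    [MeasurableSpace E]
    [MetricSpace E0]
    (lamE : Measure E) [IsProbabilityMeasure lamE]
    (F : S → A → Measure (S × A) → E → E0 → S)
    (hFmeas : ∀ (Λ : Measure (S × A)) (e0 : E0),
      Measurable fun q : (S × A) × E => F q.1.1 q.1.2 Λ q.2 e0)
    (CF : ℝ) (hCF : 0 < CF)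
    (hFlip : ∀ (s s' : S) (a a' : A) (Λ Λ' : Measure (S × A)) (e0 e0' : E0),
      IsProbabilityMeasure Λ → IsProbabilityMeasure Λ' →
      ∫ e, dist (F s a Λ e e0) (F s' a' Λ' e e0') ∂lamE ≤
        CF * (dist s s' + dist a a' + W1sum Λ Λ' + dist e0 e0'))
    (Λ Λ' : Measure (S × A))
    [IsProbabilityMeasure Λ] [IsProbabilityMeasure Λ']
    (e0 e0' : E0) :
    W1 ((Λ.prod lamE).map (fun q : (S × A) × E => F q.1.1 q.1.2 Λ q.2 e0))
       ((Λ'.prod lamE).map (fun q : (S × A) × E => F q.1.1 q.1.2 Λ' q.2 e0')) ≤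
      CF * (2 * W1sum Λ Λ' + dist e0 e0') := by
  have hG := hFmeas Λ e0
  have hG' := hFmeas Λ' e0'
  refine (le_mul_W1sum_add (c := W1sum Λ Λ' + dist e0 e0') hCF fun γ _ hγ₁ hγ₂ => ?_).trans_eq
    (by ring)
  have hcost := integrable_dist_add_dist γ
  have := isProbabilityMeasure_commonNoiseCoupling (γ := γ) (ν := lamE) hG hG'
  calc W1 _ _ ≤ ∫ p, dist p.1 p.2 ∂(commonNoiseCoupling γ lamE _ _) :=
        W1_le_integral_dist _ (by rw [map_fst_commonNoiseCoupling hG hG', hγ₁])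
          (by rw [map_snd_commonNoiseCoupling hG hG', hγ₂])
    _ = ∫ q, ∫ e, dist (F q.1.1 q.1.2 Λ e e0) (F q.2.1 q.2.2 Λ' e e0') ∂lamE ∂γ :=
        integral_dist_commonNoiseCoupling hG hG'
    _ ≤ ∫ q, CF * ((dist q.1.1 q.2.1 + dist q.1.2 q.2.2) + (W1sum Λ Λ' + dist e0 e0')) ∂γ :=
        integral_mono_of_nonneg (ae_of_all _ fun _ => integral_nonneg fun _ => dist_nonneg)
          ((hcost.add (integrable_const _)).const_mul CF) (ae_of_all _ fun _ =>
            (hFlip _ _ _ _ Λ Λ' e0 e0' ‹_› ‹_›).trans_eq (by ring))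
    _ = CF * (∫ q, (dist q.1.1 q.2.1 + dist q.1.2 q.2.2) ∂γ + (W1sum Λ Λ' + dist e0 e0')) := by
        rw [integral_const_mul, integral_add hcost (integrable_const _), integral_const]
        simp

/-- Lipschitz estimate for the lifted transition function
`F̄(μ,Λ,e⁰) = (Λ ⊗ λ_ε) ∘ F(·,·,Λ,·,e⁰)⁻¹`:
`W(F̄(μ,Λ,e⁰), F̄(μ̃,Λ̃,ẽ⁰)) ≤ C̄_F (2 W(Λ,Λ̃) + d(e⁰,ẽ⁰))`. -/
theorem stmt_6 {S A E E0 : Type*}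
    [MetricSpace S] [CompactSpace S] [MeasurableSpace S] [BorelSpace S]
    [MetricSpace A] [CompactSpace A] [MeasurableSpace A] [BorelSpace A]
    [MetricSpace E] [MeasurableSpace E] [BorelSpace E] [PolishSpace E]
    [MetricSpace E0] [MeasurableSpace E0] [BorelSpace E0] [PolishSpace E0]
    (lamE : Measure E) [IsProbabilityMeasure lamE]
    (F : S → A → Measure (S × A) → E → E0 → S)
    (hFmeas : ∀ (Λ : Measure (S × A)) (e0 : E0),
      Measurable fun q : (S × A) × E => F q.1.1 q.1.2 Λ q.2 e0)
    (CF : ℝ) (hCF : 0 < CF)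
    (hFlip : ∀ (s s' : S) (a a' : A) (Λ Λ' : Measure (S × A)) (e0 e0' : E0),
      IsProbabilityMeasure Λ → IsProbabilityMeasure Λ' →
      ∫ e, dist (F s a Λ e e0) (F s' a' Λ' e e0') ∂lamE ≤
        CF * (dist s s' + dist a a' + W1sum Λ Λ' + dist e0 e0'))
    (μ μ' : Measure S) (Λ Λ' : Measure (S × A))
    [IsProbabilityMeasure Λ] [IsProbabilityMeasure Λ']
    (hm : Λ.map Prod.fst = μ) (hm' : Λ'.map Prod.fst = μ')
    (e0 e0' : E0) :
    W1 ((Λ.prod lamE).map (fun q : (S × A) × E => F q.1.1 q.1.2 Λ q.2 e0))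
       ((Λ'.prod lamE).map (fun q : (S × A) × E => F q.1.1 q.1.2 Λ' q.2 e0')) ≤
      CF * (2 * W1sum Λ Λ' + dist e0 e0') :=
  stmt_6_general lamE F hFmeas CF hCF hFlip Λ Λ' e0 e0'
end

section
/- Let 𝒯 be the Bellman–Isaacs operator on bounded Lipschitz functions on P(S): (𝒯V̄)(μ) = sup_{Λ ∈ 𝔘(μ)} { r̄(μ,Λ) + β·inf_{p ∈ 𝔓⁰} ∫_{P(S)} V̄(μ') p̄(dμ' | μ, Λ, p) }, where p̄(·|μ,Λ,p) is the pushforward of p by e⁰ ↦ F̄(μ,Λ,e⁰). Under the standing assumptions (𝔓⁰ compact, F̄ satisfying W(F̄(μ,Λ,e⁰),F̄(μ̃,Λ̃,ẽ⁰)) ≤ C̄_F(2W(Λ,Λ̃)+d(e⁰,ẽ⁰)), r̄ bounded and 2C̄_r-Lipschitz in Λ, and β ∈ [0, min(1, 1/(2C̄_F)))), for any L̄ ≥ 2C̄_r/(1−2βC̄_F): if V̄ is bounded and L̄-Lipschitz on P(S), then 𝒯V̄ is bounded and L̄-Lipschitz on P(S). -/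
/-!
Fix a coupling `γ` of `μ` and `μ'` and an admissible `Λ ∈ 𝔘(μ)`. Gluing `γ` with the
disintegration `Λ(da | s)` (draw `(s, s') ~ γ`, then `a ~ Λ(· | s)`) gives `Λ' ∈ 𝔘(μ')`, the law
of `(s', a)`, with `W(Λ, Λ') ≤ ∫ d dγ`. Along this move the reward changes by at most
`2 C̄_r W(Λ, Λ')` and, since `V̄ ∘ F̄` is `2 C̄_F L̄`-Lipschitz in `Λ`, the worst-case continuation
value by at most `2 C̄_F L̄ W(Λ, Λ')`. The condition on `L̄` is exactly
`2 C̄_r + 2 β C̄_F L̄ ≤ L̄`, so `𝒯V̄(μ) ≤ 𝒯V̄(μ') + L̄ ∫ d dγ`; taking the infimum over `γ` gives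
the Lipschitz bound.
-/

open MeasureTheory

/-- The Bellman–Isaacs operator
`(𝒯V̄)(μ) = sup_{Λ ∈ 𝔘(μ)} { r̄(μ,Λ) + β inf_{p ∈ 𝔓⁰} ∫ V̄(F̄(μ,Λ,e⁰)) dp(e⁰) }`,
where the inner integral is `∫ V̄ dp̄(·|μ,Λ,p)` for `p̄(·|μ,Λ,p)` the pushforward of `p`
by `e⁰ ↦ F̄(μ,Λ,e⁰)`. -/
noncomputable def BellmanT {S A E0 : Type*}
    [MeasurableSpace S] [PseudoMetricSpace S] [MeasurableSpace A] [PseudoMetricSpace A]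
    [MeasurableSpace E0]
    (P0 : Set (ProbabilityMeasure E0)) (β : ℝ)
    (rbar : ProbabilityMeasure S → ProbabilityMeasure (S × A) → ℝ)
    (Fbar : ProbabilityMeasure S → ProbabilityMeasure (S × A) → E0 → ProbabilityMeasure S)
    (V : ProbabilityMeasure S → ℝ) (μ : ProbabilityMeasure S) : ℝ :=
  ⨆ Λ : {Λ : ProbabilityMeasure (S × A) //
      (Λ : Measure (S × A)).map Prod.fst = (μ : Measure S)},
    (rbar μ Λ.1 + β * ⨅ p : P0, ∫ e0, V (Fbar μ Λ.1 e0) ∂(p.1 : Measure E0))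

open ProbabilityTheory

section RealBounds

variable {ι : Sort*} [Nonempty ι] {f g : ι → ℝ} {c M : ℝ}

lemma abs_ciSup_le_of_forall_abs_le (h : ∀ i, |f i| ≤ M) : |⨆ i, f i| ≤ M := by
  obtain ⟨i⟩ := ‹Nonempty ι›
  have hbdd : BddAbove (Set.range f) := ⟨M, Set.forall_mem_range.2 fun i => (abs_le.1 (h i)).2⟩
  exact abs_le.2 ⟨(abs_le.1 (h i)).1.trans (le_ciSup hbdd i), ciSup_le fun i => (abs_le.1 (h i)).2⟩

lemma abs_ciInf_le_of_forall_abs_le (h : ∀ i, |f i| ≤ M) : |⨅ i, f i| ≤ M := by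
  obtain ⟨i⟩ := ‹Nonempty ι›
  have hbdd : BddBelow (Set.range f) := ⟨-M, Set.forall_mem_range.2 fun i => (abs_le.1 (h i)).1⟩
  exact abs_le.2 ⟨le_ciInf fun i => (abs_le.1 (h i)).1, (ciInf_le hbdd i).trans (abs_le.1 (h i)).2⟩

lemma ciInf_le_ciInf_add (hf : BddBelow (Set.range f)) (h : ∀ i, f i ≤ g i + c) :
    ⨅ i, f i ≤ (⨅ i, g i) + c :=
  le_ciInf_add fun i => (ciInf_le hf i).trans (h i)

end RealBounds

lemma integral_le_integral_add_of_le_add {X : Type*} [MeasurableSpace X] {p : Measure X}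
    [IsProbabilityMeasure p] {f g : X → ℝ} {c : ℝ} (hf : Integrable f p) (hg : Integrable g p)
    (h : ∀ x, f x ≤ g x + c) : ∫ x, f x ∂p ≤ ∫ x, g x ∂p + c := by
  calc ∫ x, f x ∂p ≤ ∫ x, (g x + c) ∂p := integral_mono hf (hg.add (integrable_const c)) h
    _ = ∫ x, g x ∂p + c := by simp [integral_add hg (integrable_const c)]

lemma abs_integral_le_of_forall_abs_le {X : Type*} [MeasurableSpace X] {p : Measure X}
    [IsProbabilityMeasure p] {f : X → ℝ} {M : ℝ} (h : ∀ x, |f x| ≤ M) : |∫ x, f x ∂p| ≤ M := by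
  simpa using norm_integral_le_of_norm_le_const (μ := p)
    (Filter.Eventually.of_forall fun x => (Real.norm_eq_abs _).trans_le (h x))

section Wasserstein

variable {X : Type*} [MeasurableSpace X] [PseudoMetricSpace X]

lemma W1_comm (μ ν : Measure X) : W1 μ ν = W1 ν μ := by
  let e : X × X ≃ᵐ X × X := MeasurableEquiv.prodComm
  unfold W1
  congr 1
  ext r
  constructor <;>
  · rintro ⟨γ, hγ, h1, h2, rfl⟩
    refine ⟨γ.map e, Measure.isProbabilityMeasure_map e.measurable.aemeasurable, ?_, ?_, ?_⟩
    · rwa [Measure.map_map measurable_fst e.measurable]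
    · rwa [Measure.map_map measurable_snd e.measurable]
    · rw [integral_map_equiv]
      exact integral_congr_ae (Filter.Eventually.of_forall fun p => dist_comm _ _)

lemma le_mul_W1_of_forall_coupling {μ ν : Measure X} [IsProbabilityMeasure μ]
    [IsProbabilityMeasure ν] {a c : ℝ} (hc : 0 < c)
    (h : ∀ γ : Measure (X × X), IsProbabilityMeasure γ → γ.map Prod.fst = μ →
      γ.map Prod.snd = ν → a ≤ c * ∫ p, dist p.1 p.2 ∂γ) :
    a ≤ c * W1 μ ν := by
  rw [← div_le_iff₀' hc]
  refine le_csInf ⟨_, μ.prod ν, inferInstance, Measure.fst_prod, Measure.snd_prod, rfl⟩ ?_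
  rintro r ⟨γ, hγ, h1, h2, rfl⟩
  exact (div_le_iff₀' hc).2 (h γ hγ h1 h2)

end Wasserstein

section W1sum

variable {S A : Type*} [PseudoMetricSpace S] [MeasurableSpace S] [PseudoMetricSpace A]
  [MeasurableSpace A]

lemma W1sum_nonneg (Λ Λ' : Measure (S × A)) : 0 ≤ W1sum Λ Λ' :=
  Real.sInf_nonneg <| by
    rintro r ⟨γ, -, -, -, rfl⟩
    exact integral_nonneg fun q => add_nonneg dist_nonneg dist_nonneg

lemma W1sum_le_integral {Λ Λ' : Measure (S × A)} (γ : Measure ((S × A) × (S × A)))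
    [IsProbabilityMeasure γ] (h1 : γ.map Prod.fst = Λ) (h2 : γ.map Prod.snd = Λ') :
    W1sum Λ Λ' ≤ ∫ q, (dist q.1.1 q.2.1 + dist q.1.2 q.2.2) ∂γ := by
  refine csInf_le ⟨0, ?_⟩ ⟨γ, inferInstance, h1, h2, rfl⟩
  rintro r ⟨γ, -, -, -, rfl⟩
  exact integral_nonneg fun q => add_nonneg dist_nonneg dist_nonneg

variable [OpensMeasurableSpace S] [SecondCountableTopology S] [OpensMeasurableSpace A]
  [SecondCountableTopology A]

lemma W1sum_self (Λ : Measure (S × A)) [IsProbabilityMeasure Λ] : W1sum Λ Λ = 0 := by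
  have hdiag : Measurable fun x : S × A => (x, x) := measurable_id.prodMk measurable_id
  have := Measure.isProbabilityMeasure_map (μ := Λ) hdiag.aemeasurable
  have hle := W1sum_le_integral (Λ.map fun x => (x, x))
    (Λ := Λ) (Λ' := Λ)
    (by rw [Measure.map_map measurable_fst hdiag]; exact Measure.map_id)
    (by rw [Measure.map_map measurable_snd hdiag]; exact Measure.map_id)
  rw [integral_map hdiag.aemeasurable (by fun_prop : Continuous fun q : (S × A) × (S × A) =>
    dist q.1.1 q.2.1 + dist q.1.2 q.2.2).aestronglyMeasurable] at hle
  simp only [dist_self, add_zero, integral_zero] at hle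
  exact hle.antisymm (W1sum_nonneg Λ Λ)

end W1sum

lemma MeasureTheory.Measure.map_prodMap_compProd_comap {α β γ : Type*} [MeasurableSpace α]
    [MeasurableSpace β] [MeasurableSpace γ] (μ : Measure α) [SFinite μ] (κ : Kernel β γ)
    [IsSFiniteKernel κ] {f : α → β} (hf : Measurable f) :
    (μ ⊗ₘ κ.comap f hf).map (Prod.map f id) = μ.map f ⊗ₘ κ := by
  ext s hs
  have hfs : MeasurableSet (Prod.map f id ⁻¹' s) := hf.prodMap measurable_id hs
  rw [Measure.map_apply (hf.prodMap measurable_id) hs, Measure.compProd_apply hfs,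
    Measure.compProd_apply hs, lintegral_map (Kernel.measurable_kernel_prodMk_left hs) hf]
  rfl

section CouplingTransfer

variable {S A : Type*} [PseudoMetricSpace S] [MeasurableSpace S] [OpensMeasurableSpace S]
  [SecondCountableTopology S] [PseudoMetricSpace A] [MeasurableSpace A] [OpensMeasurableSpace A]
  [SecondCountableTopology A] [StandardBorelSpace A] [Nonempty A]

lemma exists_W1sum_le_integral_dist_of_map_fst_eq (Λ : Measure (S × A)) [IsProbabilityMeasure Λ]
    (γ : Measure (S × S)) [IsProbabilityMeasure γ] (hγ : γ.map Prod.fst = Λ.map Prod.fst) :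
    ∃ Λ' : ProbabilityMeasure (S × A), (Λ' : Measure (S × A)).map Prod.fst = γ.map Prod.snd ∧
      W1sum Λ Λ' ≤ ∫ p, dist p.1 p.2 ∂γ := by
  let m : Measure ((S × S) × A) := γ ⊗ₘ Λ.condKernel.comap Prod.fst measurable_fst
  have hm_fst : m.map Prod.fst = γ := Measure.fst_compProd γ _
  have hm_left : m.map (Prod.map Prod.fst id) = Λ := by
    rw [Measure.map_prodMap_compProd_comap, hγ]
    exact Λ.disintegrate Λ.condKernel
  let φ : (S × S) × A → (S × A) × (S × A) := fun q => ((q.1.1, q.2), (q.1.2, q.2))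
  have hφ : Measurable φ := by fun_prop
  have hright : Measurable (Prod.map Prod.snd id : (S × S) × A → S × A) := by fun_prop
  have := Measure.isProbabilityMeasure_map (μ := m) hφ.aemeasurable
  refine ⟨⟨m.map (Prod.map Prod.snd id), Measure.isProbabilityMeasure_map hright.aemeasurable⟩,
    ?_, ?_⟩
  · rw [ProbabilityMeasure.coe_mk, Measure.map_map measurable_fst hright, ← hm_fst,
      Measure.map_map measurable_snd measurable_fst]
    rfl
  calc W1sum Λ (m.map (Prod.map Prod.snd id))
      ≤ ∫ q, (dist q.1.1 q.2.1 + dist q.1.2 q.2.2) ∂(m.map φ) :=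
        W1sum_le_integral _ (by rw [Measure.map_map measurable_fst hφ]; exact hm_left)
          (Measure.map_map measurable_snd hφ)
    _ = ∫ q, dist q.1.1 q.1.2 ∂m := by
        rw [integral_map hφ.aemeasurable (by fun_prop : Continuous fun q : (S × A) × (S × A) =>
          dist q.1.1 q.2.1 + dist q.1.2 q.2.2).aestronglyMeasurable]
        simp only [φ, dist_self, add_zero]
    _ = ∫ p, dist p.1 p.2 ∂γ := by
        rw [← hm_fst, integral_map measurable_fst.aemeasurable
          continuous_dist.aestronglyMeasurable]

end CouplingTransfer

section Bellman

variable {S A E0 : Type*} [MeasurableSpace S] [MeasurableSpace A]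

instance [Nonempty A] (μ : ProbabilityMeasure S) :
    Nonempty {Λ : ProbabilityMeasure (S × A) // (Λ : Measure (S × A)).map Prod.fst = μ} :=
  ⟨⟨⟨(μ : Measure S).prod (Measure.dirac (Classical.arbitrary A)), inferInstance⟩,
    Measure.fst_prod⟩⟩

section Lipschitz

variable [PseudoMetricSpace S] [PseudoMetricSpace A] [PseudoMetricSpace E0]

def LipschitzTransition (CF : ℝ)
    (Fbar : ProbabilityMeasure S → ProbabilityMeasure (S × A) → E0 → ProbabilityMeasure S) :
    Prop :=
  ∀ (μ μ' : ProbabilityMeasure S) (Λ Λ' : ProbabilityMeasure (S × A)) (e0 e0' : E0),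
    (Λ : Measure (S × A)).map Prod.fst = (μ : Measure S) →
    (Λ' : Measure (S × A)).map Prod.fst = (μ' : Measure S) →
    W1 (Fbar μ Λ e0 : Measure S) (Fbar μ' Λ' e0' : Measure S) ≤
      CF * (2 * W1sum (Λ : Measure (S × A)) (Λ' : Measure (S × A)) + dist e0 e0')

def LipschitzW1 (L : ℝ) (V : ProbabilityMeasure S → ℝ) : Prop :=
  ∀ μ μ' : ProbabilityMeasure S, |V μ - V μ'| ≤ L * W1 (μ : Measure S) (μ' : Measure S)

lemma LipschitzW1.abs_comp_sub_comp_le {L CF : ℝ} {V : ProbabilityMeasure S → ℝ}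
    {Fbar : ProbabilityMeasure S → ProbabilityMeasure (S × A) → E0 → ProbabilityMeasure S}
    {μ μ' : ProbabilityMeasure S} {Λ Λ' : ProbabilityMeasure (S × A)}
    (hV : LipschitzW1 L V) (hF : LipschitzTransition CF Fbar) (hL : 0 ≤ L)
    (hΛ : (Λ : Measure (S × A)).map Prod.fst = μ)
    (hΛ' : (Λ' : Measure (S × A)).map Prod.fst = μ') (e0 e0' : E0) :
    |V (Fbar μ Λ e0) - V (Fbar μ' Λ' e0')| ≤
      L * (CF * (2 * W1sum (Λ : Measure (S × A)) (Λ' : Measure (S × A)) + dist e0 e0')) :=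
  (hV _ _).trans (mul_le_mul_of_nonneg_left (hF μ μ' Λ Λ' e0 e0' hΛ hΛ') hL)

end Lipschitz

variable [MeasurableSpace E0]

noncomputable def worstCaseValue (P0 : Set (ProbabilityMeasure E0))
    (Fbar : ProbabilityMeasure S → ProbabilityMeasure (S × A) → E0 → ProbabilityMeasure S)
    (V : ProbabilityMeasure S → ℝ) (μ : ProbabilityMeasure S) (Λ : ProbabilityMeasure (S × A)) :
    ℝ :=
  ⨅ p : P0, ∫ e0, V (Fbar μ Λ e0) ∂(p.1 : Measure E0)

variable {P0 : Set (ProbabilityMeasure E0)}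
  {Fbar : ProbabilityMeasure S → ProbabilityMeasure (S × A) → E0 → ProbabilityMeasure S}
  {rbar : ProbabilityMeasure S → ProbabilityMeasure (S × A) → ℝ} {V : ProbabilityMeasure S → ℝ}
  {μ μ' : ProbabilityMeasure S} {Λ Λ' : ProbabilityMeasure (S × A)} {β L CF Cr Mr Mv : ℝ}

lemma abs_worstCaseValue_le [Nonempty P0] (hVb : ∀ μ, |V μ| ≤ Mv) :
    |worstCaseValue P0 Fbar V μ Λ| ≤ Mv :=
  abs_ciInf_le_of_forall_abs_le fun _ => abs_integral_le_of_forall_abs_le fun _ => hVb _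

lemma abs_add_mul_worstCaseValue_le [Nonempty P0] (hβ : 0 ≤ β)
    (hrb : ∀ (μ : ProbabilityMeasure S) (Λ : ProbabilityMeasure (S × A)),
      (Λ : Measure (S × A)).map Prod.fst = (μ : Measure S) → |rbar μ Λ| ≤ Mr)
    (hVb : ∀ μ, |V μ| ≤ Mv) (hΛ : (Λ : Measure (S × A)).map Prod.fst = μ) :
    |rbar μ Λ + β * worstCaseValue P0 Fbar V μ Λ| ≤ Mr + β * Mv := by
  refine (abs_add_le _ _).trans ?_
  rw [abs_mul, abs_of_nonneg hβ]
  exact add_le_add (hrb μ Λ hΛ) (mul_le_mul_of_nonneg_left (abs_worstCaseValue_le hVb) hβ)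

variable [PseudoMetricSpace S] [PseudoMetricSpace A]

lemma abs_BellmanT_le [Nonempty A] [Nonempty P0] (hβ : 0 ≤ β)
    (hrb : ∀ (μ : ProbabilityMeasure S) (Λ : ProbabilityMeasure (S × A)),
      (Λ : Measure (S × A)).map Prod.fst = (μ : Measure S) → |rbar μ Λ| ≤ Mr)
    (hVb : ∀ μ, |V μ| ≤ Mv) (μ : ProbabilityMeasure S) :
    |BellmanT P0 β rbar Fbar V μ| ≤ Mr + β * Mv :=
  abs_ciSup_le_of_forall_abs_le fun Λ => abs_add_mul_worstCaseValue_le hβ hrb hVb Λ.2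

lemma le_BellmanT [Nonempty P0] (hβ : 0 ≤ β)
    (hrb : ∀ (μ : ProbabilityMeasure S) (Λ : ProbabilityMeasure (S × A)),
      (Λ : Measure (S × A)).map Prod.fst = (μ : Measure S) → |rbar μ Λ| ≤ Mr)
    (hVb : ∀ μ, |V μ| ≤ Mv) (hΛ : (Λ : Measure (S × A)).map Prod.fst = μ) :
    rbar μ Λ + β * worstCaseValue P0 Fbar V μ Λ ≤ BellmanT P0 β rbar Fbar V μ :=
  le_ciSup (f := fun Λ : {Λ : ProbabilityMeasure (S × A) //
      (Λ : Measure (S × A)).map Prod.fst = μ} => rbar μ Λ.1 + β * worstCaseValue P0 Fbar V μ Λ.1)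
    ⟨Mr + β * Mv, Set.forall_mem_range.2 fun Λ =>
      (abs_le.1 (abs_add_mul_worstCaseValue_le hβ hrb hVb Λ.2)).2⟩ ⟨Λ, hΛ⟩

variable [PseudoMetricSpace E0] [OpensMeasurableSpace S] [SecondCountableTopology S]
  [OpensMeasurableSpace A] [SecondCountableTopology A] [OpensMeasurableSpace E0]

lemma LipschitzW1.integrable_comp (hV : LipschitzW1 L V) (hF : LipschitzTransition CF Fbar)
    (hL : 0 ≤ L) (hVb : ∀ μ, |V μ| ≤ Mv) (hΛ : (Λ : Measure (S × A)).map Prod.fst = μ)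
    (p : Measure E0) [IsFiniteMeasure p] :
    Integrable (fun e0 => V (Fbar μ Λ e0)) p := by
  have hlip : LipschitzWith (Real.toNNReal (L * CF)) fun e0 => V (Fbar μ Λ e0) := by
    refine LipschitzWith.of_dist_le_mul fun e0 e0' => ?_
    have h := hV.abs_comp_sub_comp_le hF hL hΛ hΛ e0 e0'
    rw [W1sum_self, mul_zero, zero_add, ← mul_assoc] at h
    rw [Real.dist_eq, Real.coe_toNNReal']
    exact h.trans (mul_le_mul_of_nonneg_right (le_max_left _ _) dist_nonneg)
  exact Integrable.of_bound hlip.continuous.aestronglyMeasurable Mv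
    (Filter.Eventually.of_forall fun _ => hVb _)

lemma worstCaseValue_le_add [Nonempty P0] (hV : LipschitzW1 L V)
    (hF : LipschitzTransition CF Fbar) (hL : 0 ≤ L) (hVb : ∀ μ, |V μ| ≤ Mv)
    (hΛ : (Λ : Measure (S × A)).map Prod.fst = μ)
    (hΛ' : (Λ' : Measure (S × A)).map Prod.fst = μ') :
    worstCaseValue P0 Fbar V μ Λ ≤ worstCaseValue P0 Fbar V μ' Λ' +
      2 * CF * L * W1sum (Λ : Measure (S × A)) (Λ' : Measure (S × A)) := by
  have hbdd : BddBelow (Set.range fun p : P0 => ∫ e0, V (Fbar μ Λ e0) ∂(p.1 : Measure E0)) :=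
    ⟨-Mv, Set.forall_mem_range.2 fun _ =>
      (abs_le.1 (abs_integral_le_of_forall_abs_le fun _ => hVb _)).1⟩
  refine ciInf_le_ciInf_add hbdd fun p => integral_le_integral_add_of_le_add
    (hV.integrable_comp hF hL hVb hΛ _) (hV.integrable_comp hF hL hVb hΛ' _) fun e0 => ?_
  have h := hV.abs_comp_sub_comp_le hF hL hΛ hΛ' e0 e0
  rw [dist_self] at h
  linarith [(abs_le.1 h).2]

lemma BellmanT_le_add_mul_W1 [StandardBorelSpace A] [Nonempty A] [Nonempty P0] (hβ : 0 ≤ β)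
    (hL : 0 < L) (hLCr : 2 * Cr + 2 * β * CF * L ≤ L)
    (hrb : ∀ (μ : ProbabilityMeasure S) (Λ : ProbabilityMeasure (S × A)),
      (Λ : Measure (S × A)).map Prod.fst = (μ : Measure S) → |rbar μ Λ| ≤ Mr)
    (hrlip : ∀ (μ μ' : ProbabilityMeasure S) (Λ Λ' : ProbabilityMeasure (S × A)),
      (Λ : Measure (S × A)).map Prod.fst = (μ : Measure S) →
      (Λ' : Measure (S × A)).map Prod.fst = (μ' : Measure S) →
      |rbar μ Λ - rbar μ' Λ'| ≤ 2 * Cr * W1sum (Λ : Measure (S × A)) (Λ' : Measure (S × A)))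
    (hVb : ∀ μ, |V μ| ≤ Mv) (hV : LipschitzW1 L V) (hF : LipschitzTransition CF Fbar)
    (μ μ' : ProbabilityMeasure S) :
    BellmanT P0 β rbar Fbar V μ ≤ BellmanT P0 β rbar Fbar V μ' + L * W1 (μ : Measure S) μ' := by
  rw [← sub_le_iff_le_add']
  refine le_mul_W1_of_forall_coupling hL fun γ _ hγμ hγμ' => ?_
  rw [sub_le_iff_le_add']
  refine ciSup_le fun Λ => ?_
  obtain ⟨Λ', hΛ'γ, hW⟩ :=
    exists_W1sum_le_integral_dist_of_map_fst_eq (Λ : Measure (S × A)) γ (hγμ.trans Λ.2.symm)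
  have hΛ' : (Λ' : Measure (S × A)).map Prod.fst = μ' := hΛ'γ.trans hγμ'
  have hr := (abs_le.1 (hrlip μ μ' Λ Λ' Λ.2 hΛ')).2
  have hD := worstCaseValue_le_add (P0 := P0) hV hF hL.le hVb Λ.2 hΛ'
  have hT := le_BellmanT (P0 := P0) (Fbar := Fbar) hβ hrb hVb hΛ'
  calc rbar μ Λ + β * worstCaseValue P0 Fbar V μ Λ
      ≤ (rbar μ' Λ' + β * worstCaseValue P0 Fbar V μ' Λ') +
          (2 * Cr + 2 * β * CF * L) * W1sum (Λ : Measure (S × A)) Λ' := by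
        linarith [mul_le_mul_of_nonneg_left hD hβ]
    _ ≤ BellmanT P0 β rbar Fbar V μ' + L * ∫ p, dist p.1 p.2 ∂γ :=
        add_le_add hT (mul_le_mul hLCr hW (W1sum_nonneg _ _) hL.le)

end Bellman

theorem stmt_9_general {S A E0 : Type*}
    [MetricSpace S] [CompactSpace S] [MeasurableSpace S] [BorelSpace S]
    [MetricSpace A] [CompactSpace A] [MeasurableSpace A] [BorelSpace A] [Nonempty A]
    [MetricSpace E0] [MeasurableSpace E0] [BorelSpace E0]
    (P0 : Set (ProbabilityMeasure E0)) (hP0ne : P0.Nonempty)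
    (Fbar : ProbabilityMeasure S → ProbabilityMeasure (S × A) → E0 → ProbabilityMeasure S)
    (CF : ℝ) (hCF : 0 < CF)
    (hFlip : ∀ (μ μ' : ProbabilityMeasure S) (Λ Λ' : ProbabilityMeasure (S × A)) (e0 e0' : E0),
      (Λ : Measure (S × A)).map Prod.fst = (μ : Measure S) →
      (Λ' : Measure (S × A)).map Prod.fst = (μ' : Measure S) →
      W1 (Fbar μ Λ e0 : Measure S) (Fbar μ' Λ' e0' : Measure S) ≤
        CF * (2 * W1sum (Λ : Measure (S × A)) (Λ' : Measure (S × A)) + dist e0 e0'))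
    (rbar : ProbabilityMeasure S → ProbabilityMeasure (S × A) → ℝ)
    (Cr : ℝ) (hCr : 0 < Cr)
    (hrb : ∃ M, ∀ (μ : ProbabilityMeasure S) (Λ : ProbabilityMeasure (S × A)),
      (Λ : Measure (S × A)).map Prod.fst = (μ : Measure S) → |rbar μ Λ| ≤ M)
    (hrlip : ∀ (μ μ' : ProbabilityMeasure S) (Λ Λ' : ProbabilityMeasure (S × A)),
      (Λ : Measure (S × A)).map Prod.fst = (μ : Measure S) →
      (Λ' : Measure (S × A)).map Prod.fst = (μ' : Measure S) →
      |rbar μ Λ - rbar μ' Λ'| ≤ 2 * Cr * W1sum (Λ : Measure (S × A)) (Λ' : Measure (S × A)))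
    (β : ℝ) (hβ0 : 0 ≤ β) (hβ1 : β < min 1 (1 / (2 * CF)))
    (L : ℝ) (hLlb : 2 * Cr / (1 - 2 * β * CF) ≤ L)
    (V : ProbabilityMeasure S → ℝ)
    (hVb : ∃ M, ∀ μ, |V μ| ≤ M)
    (hVlip : ∀ μ μ' : ProbabilityMeasure S,
      |V μ - V μ'| ≤ L * W1 (μ : Measure S) (μ' : Measure S)) :
    (∃ M, ∀ μ, |BellmanT P0 β rbar Fbar V μ| ≤ M) ∧
    ∀ μ μ' : ProbabilityMeasure S,
      |BellmanT P0 β rbar Fbar V μ - BellmanT P0 β rbar Fbar V μ'| ≤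
        L * W1 (μ : Measure S) (μ' : Measure S) := by
  obtain ⟨Mr, hMr⟩ := hrb
  obtain ⟨Mv, hMv⟩ := hVb
  have := hP0ne.to_subtype
  have hβCF : β * (2 * CF) < 1 :=
    (lt_div_iff₀ (by positivity)).1 (hβ1.trans_le (min_le_right _ _))
  have hden : 0 < 1 - 2 * β * CF := by linarith
  have hL : 0 < L := (div_pos (by positivity) hden).trans_le hLlb
  have hLCr : 2 * Cr + 2 * β * CF * L ≤ L := by
    have := (div_le_iff₀ hden).1 hLlb
    linarith
  have hT := BellmanT_le_add_mul_W1 (P0 := P0) hβ0 hL hLCr hMr hrlip hMv hVlip hFlip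
  refine ⟨⟨Mr + β * Mv, abs_BellmanT_le hβ0 hMr hMv⟩, fun μ μ' => abs_sub_le_iff.2 ⟨?_, ?_⟩⟩
  · linarith [hT μ μ']
  · rw [W1_comm]
    linarith [hT μ' μ]

/-- Lipschitz invariance of the Bellman–Isaacs operator: under the standing
assumptions and for `L̄ ≥ 2C̄_r/(1 − 2βC̄_F)`, if `V̄` is bounded and `L̄`-Lipschitz on
`P(S)` then so is `𝒯V̄`. -/
theorem stmt_9 {S A E0 : Type*}
    [MetricSpace S] [CompactSpace S] [MeasurableSpace S] [BorelSpace S] [Nonempty S]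
    [MetricSpace A] [CompactSpace A] [MeasurableSpace A] [BorelSpace A] [Nonempty A]
    [MetricSpace E0] [MeasurableSpace E0] [BorelSpace E0] [PolishSpace E0]
    (P0 : Set (ProbabilityMeasure E0)) (hP0ne : P0.Nonempty) (hP0cp : IsCompact P0)
    (Fbar : ProbabilityMeasure S → ProbabilityMeasure (S × A) → E0 → ProbabilityMeasure S)
    (CF : ℝ) (hCF : 0 < CF)
    (hFlip : ∀ (μ μ' : ProbabilityMeasure S) (Λ Λ' : ProbabilityMeasure (S × A)) (e0 e0' : E0),
      (Λ : Measure (S × A)).map Prod.fst = (μ : Measure S) →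
      (Λ' : Measure (S × A)).map Prod.fst = (μ' : Measure S) →
      W1 (Fbar μ Λ e0 : Measure S) (Fbar μ' Λ' e0' : Measure S) ≤
        CF * (2 * W1sum (Λ : Measure (S × A)) (Λ' : Measure (S × A)) + dist e0 e0'))
    (rbar : ProbabilityMeasure S → ProbabilityMeasure (S × A) → ℝ)
    (Cr : ℝ) (hCr : 0 < Cr)
    (hrb : ∃ M, ∀ (μ : ProbabilityMeasure S) (Λ : ProbabilityMeasure (S × A)),
      (Λ : Measure (S × A)).map Prod.fst = (μ : Measure S) → |rbar μ Λ| ≤ M)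
    (hrlip : ∀ (μ μ' : ProbabilityMeasure S) (Λ Λ' : ProbabilityMeasure (S × A)),
      (Λ : Measure (S × A)).map Prod.fst = (μ : Measure S) →
      (Λ' : Measure (S × A)).map Prod.fst = (μ' : Measure S) →
      |rbar μ Λ - rbar μ' Λ'| ≤ 2 * Cr * W1sum (Λ : Measure (S × A)) (Λ' : Measure (S × A)))
    (β : ℝ) (hβ0 : 0 ≤ β) (hβ1 : β < min 1 (1 / (2 * CF)))
    (L : ℝ) (hLlb : 2 * Cr / (1 - 2 * β * CF) ≤ L)
    (V : ProbabilityMeasure S → ℝ)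
    (hVb : ∃ M, ∀ μ, |V μ| ≤ M)
    (hVlip : ∀ μ μ' : ProbabilityMeasure S,
      |V μ - V μ'| ≤ L * W1 (μ : Measure S) (μ' : Measure S)) :
    (∃ M, ∀ μ, |BellmanT P0 β rbar Fbar V μ| ≤ M) ∧
    ∀ μ μ' : ProbabilityMeasure S,
      |BellmanT P0 β rbar Fbar V μ - BellmanT P0 β rbar Fbar V μ'| ≤
        L * W1 (μ : Measure S) (μ' : Measure S) :=
  stmt_9_general P0 hP0ne Fbar CF hCF hFlip rbar Cr hCr hrb hrlip β hβ0 hβ1 L hLlb V hVb hVlip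
end
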